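/- arXiv:0807.2982 — 2 statements merged into one kernel-verified Lean document; each statement's English description precedes it below -/
import Mathlib

section
/- Let H be a complex Hilbert space and let A ⊆ B(H) be a unital C*-subalgebra possessing a weak expectation, i.e., there exists a completely contractive linear map Φ : B(H) → B(H) with Φ(a) = a for all a ∈ A whose range is contained in the double commutant A''. Then every minimal A-projection E on B(H) satisfies E(A'') = range(E). -/
/-!
Let `Φ` be the weak expectation and `G = E ∘ Φ ∘ E`. Then `G` is an `A`-map with
`E ∘ G = G = G ∘ E`, so the Cesàro means `ψₘ = m⁻¹ (G + ⋯ + Gᵐ)` are `A`-maps with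
`ψₘ = ψₘ ∘ E`, hence `‖ψₘ T‖ ≤ ‖E T‖`, and minimality of `E` upgrades this to equality.
Applied to `G T - T` the sum telescopes:
`‖G T - E T‖ = ‖ψₘ (G T - T)‖ = m⁻¹ ‖Gᵐ⁺¹ T - G T‖ ≤ 2 ‖T‖ / m`, whence `E (Φ (E T)) = E T`
with `Φ (E T) ∈ A''`.
-/

variable {H : Type*} [NormedAddCommGroup H] [InnerProductSpace ℂ H] [CompleteSpace H]

/-- The bounded operator on the Hilbert space `H ⊕ ⋯ ⊕ H` (with its ℓ²-norm)
induced by an `n × n` matrix of bounded operators on `H`. -/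
noncomputable def matOp {H : Type*} [NormedAddCommGroup H] [InnerProductSpace ℂ H]
    {n : ℕ} (A : Matrix (Fin n) (Fin n) (H →L[ℂ] H)) :
    PiLp 2 (fun _ : Fin n => H) →L[ℂ] PiLp 2 (fun _ : Fin n => H) :=
  ((PiLp.continuousLinearEquiv 2 ℂ (fun _ : Fin n => H)).symm.toContinuousLinearMap.comp
      (ContinuousLinearMap.pi fun i => ∑ j, (A i j).comp (ContinuousLinearMap.proj j))).comp
    (PiLp.continuousLinearEquiv 2 ℂ (fun _ : Fin n => H)).toContinuousLinearMap

/-- A linear map on `B(H)` is completely contractive if all of its matrix amplifications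
are contractive with respect to the C*-norms on `Mₙ(B(H)) ≅ B(H ⊕ ⋯ ⊕ H)`. -/
def FullCC {H : Type*} [NormedAddCommGroup H] [InnerProductSpace ℂ H]
    (φ : (H →L[ℂ] H) →ₗ[ℂ] (H →L[ℂ] H)) : Prop :=
  ∀ (n : ℕ) (A : Matrix (Fin n) (Fin n) (H →L[ℂ] H)), ‖matOp (A.map φ)‖ ≤ ‖matOp A‖

/-- An `S`-map: a completely contractive linear map of `B(H)` fixing `S` pointwise. -/
def IsSMap {H : Type*} [NormedAddCommGroup H] [InnerProductSpace ℂ H]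
    (S : Set (H →L[ℂ] H)) (φ : (H →L[ℂ] H) →ₗ[ℂ] (H →L[ℂ] H)) : Prop :=
  FullCC φ ∧ ∀ s ∈ S, φ s = s

/-- A minimal `S`-projection: an idempotent `S`-map whose seminorm `T ↦ ‖E T‖`
is minimal among the seminorms of all `S`-maps. -/
def IsMinimalSProj {H : Type*} [NormedAddCommGroup H] [InnerProductSpace ℂ H]
    (S : Set (H →L[ℂ] H)) (E : (H →L[ℂ] H) →ₗ[ℂ] (H →L[ℂ] H)) : Prop :=
  IsSMap S E ∧ E ∘ₗ E = E ∧
    ∀ ψ : (H →L[ℂ] H) →ₗ[ℂ] (H →L[ℂ] H), IsSMap S ψ →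
      (∀ T, ‖ψ T‖ ≤ ‖E T‖) → ∀ T, ‖ψ T‖ = ‖E T‖

open Finset

section Cesaro

variable {𝕜 V : Type*} [RCLike 𝕜] [NormedAddCommGroup V] [NormedSpace 𝕜 V]

theorem norm_inv_card_smul_sum_le {ι : Type*} (s : Finset ι) (x : ι → V) {C : ℝ}
    (hC : 0 ≤ C) (hx : ∀ k ∈ s, ‖x k‖ ≤ C) : ‖(#s : 𝕜)⁻¹ • ∑ k ∈ s, x k‖ ≤ C := by
  rcases s.eq_empty_or_nonempty with rfl | hs
  · simpa using hC
  have hcard : (0 : ℝ) < #s := by exact_mod_cast hs.card_pos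
  calc ‖(#s : 𝕜)⁻¹ • ∑ k ∈ s, x k‖ = (#s : ℝ)⁻¹ * ‖∑ k ∈ s, x k‖ := by
        rw [norm_smul, norm_inv, RCLike.norm_natCast]
    _ ≤ (#s : ℝ)⁻¹ * (#s * C) := by
        gcongr
        exact (norm_sum_le _ _).trans ((sum_le_card_nsmul s _ C hx).trans_eq (nsmul_eq_mul _ _))
    _ = C := by field_simp

theorem norm_pow_apply_le_of_norm_apply_le {G : Module.End 𝕜 V} (hG : ∀ x, ‖G x‖ ≤ ‖x‖)
    (k : ℕ) (x : V) : ‖(G ^ k) x‖ ≤ ‖x‖ := by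
  induction k with
  | zero => simp
  | succ k ih =>
    rw [pow_succ', Module.End.mul_apply]
    exact (hG _).trans ih

theorem Module.End.eq_of_norm_le_norm_cesaro {G E : Module.End 𝕜 V} (hG : ∀ x, ‖G x‖ ≤ ‖x‖)
    (hEG : E * G = G)
    (hmean : ∀ m : ℕ, 0 < m → ∀ x, ‖E x‖ ≤ ‖((m : 𝕜)⁻¹ • ∑ k ∈ range m, G ^ (k + 1)) x‖) :
    G = E := by
  ext x
  have hbound : ∀ m : ℕ, 0 < m → ‖G x - E x‖ ≤ 2 * ‖x‖ / m := by
    intro m hm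
    have htelescope : ((m : 𝕜)⁻¹ • ∑ k ∈ range m, G ^ (k + 1)) (G x - x)
        = (m : 𝕜)⁻¹ • ((G ^ (m + 1)) x - G x) := by
      simp_rw [LinearMap.smul_apply, LinearMap.sum_apply, map_sub, ← Module.End.mul_apply,
        ← pow_succ]
      simpa using congrArg ((m : 𝕜)⁻¹ • ·) (sum_range_sub (fun k => (G ^ (k + 1)) x) m)
    calc ‖G x - E x‖ = ‖E (G x - x)‖ := by rw [map_sub, ← Module.End.mul_apply, hEG]
      _ ≤ (m : ℝ)⁻¹ * ‖(G ^ (m + 1)) x - G x‖ := by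
        simpa [htelescope, norm_smul] using hmean m hm (G x - x)
      _ ≤ (m : ℝ)⁻¹ * (2 * ‖x‖) := by
        gcongr
        linarith [norm_sub_le ((G ^ (m + 1)) x) (G x),
          norm_pow_apply_le_of_norm_apply_le hG (m + 1) x, hG x]
      _ = 2 * ‖x‖ / m := by ring
  refine sub_eq_zero.mp (norm_le_zero_iff.mp (ge_of_tendsto
    (tendsto_const_div_atTop_nhds_zero_nat (2 * ‖x‖)) ?_))
  filter_upwards [Filter.eventually_gt_atTop 0] with m hm using hbound m hm

end Cesaro

section Operators

variable {H : Type*} [NormedAddCommGroup H] [InnerProductSpace ℂ H]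

theorem matOp_apply {n : ℕ} (A : Matrix (Fin n) (Fin n) (H →L[ℂ] H))
    (x : PiLp 2 fun _ : Fin n => H) (i : Fin n) : matOp A x i = ∑ j, A i j (x j) := by
  simp [matOp]

theorem matOp_add {n : ℕ} (A B : Matrix (Fin n) (Fin n) (H →L[ℂ] H)) :
    matOp (A + B) = matOp A + matOp B := by
  ext x i
  simp [matOp_apply, sum_add_distrib]

theorem matOp_smul {n : ℕ} (c : ℂ) (A : Matrix (Fin n) (Fin n) (H →L[ℂ] H)) :
    matOp (c • A) = c • matOp A := by
  ext x i
  simp [matOp_apply, smul_sum]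

theorem matOp_sum {n : ℕ} {ι : Type*} (s : Finset ι)
    (F : ι → Matrix (Fin n) (Fin n) (H →L[ℂ] H)) :
    matOp (∑ k ∈ s, F k) = ∑ k ∈ s, matOp (F k) :=
  map_sum (AddMonoidHom.mk' (matOp (H := H) (n := n)) matOp_add) F s

theorem norm_matOp_fin_one (A : Matrix (Fin 1) (Fin 1) (H →L[ℂ] H)) :
    ‖matOp A‖ = ‖A 0 0‖ := by
  have norm_fin_one : ∀ x : PiLp 2 fun _ : Fin 1 => H, ‖x‖ = ‖x 0‖ := fun x => by
    simp [PiLp.norm_eq_of_L2, Real.sqrt_sq (norm_nonneg _)]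
  refine le_antisymm (ContinuousLinearMap.opNorm_le_bound _ (norm_nonneg (A 0 0)) fun x => ?_)
    (ContinuousLinearMap.opNorm_le_bound _ (norm_nonneg (matOp A)) fun y => ?_)
  · simpa [norm_fin_one, matOp_apply] using (A 0 0).le_opNorm (x 0)
  · simpa [norm_fin_one, matOp_apply] using (matOp A).le_opNorm (WithLp.toLp 2 fun _ => y)

theorem FullCC.norm_le {φ : Module.End ℂ (H →L[ℂ] H)} (hφ : FullCC φ) (T : H →L[ℂ] H) :
    ‖φ T‖ ≤ ‖T‖ := by
  simpa [norm_matOp_fin_one] using hφ 1 (Matrix.of fun _ _ => T)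

theorem FullCC.one : FullCC (1 : Module.End ℂ (H →L[ℂ] H)) := fun _ A => by
  rw [Module.End.coe_one, Matrix.map_id]

theorem FullCC.mul {φ ψ : Module.End ℂ (H →L[ℂ] H)} (hφ : FullCC φ) (hψ : FullCC ψ) :
    FullCC (φ * ψ) := fun n A => by
  rw [Module.End.coe_mul, ← Matrix.map_map]
  exact (hφ n _).trans (hψ n A)

theorem FullCC.average {ι : Type*} (s : Finset ι) {F : ι → Module.End ℂ (H →L[ℂ] H)}
    (hF : ∀ k ∈ s, FullCC (F k)) : FullCC ((#s : ℂ)⁻¹ • ∑ k ∈ s, F k) := fun n A => by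
  have hmap : A.map ⇑((#s : ℂ)⁻¹ • ∑ k ∈ s, F k) = (#s : ℂ)⁻¹ • ∑ k ∈ s, A.map (F k) := by
    refine Matrix.ext fun i j => ?_
    simp only [Matrix.map_apply, Matrix.smul_apply, Matrix.sum_apply, LinearMap.smul_apply,
      LinearMap.sum_apply]
  rw [hmap, matOp_smul, matOp_sum]
  have hbound := norm_inv_card_smul_sum_le (𝕜 := ℂ) s (fun k => matOp (A.map (F k)))
    (norm_nonneg (matOp A)) fun k hk => hF k hk n A
  exact hbound

variable {S : Set (H →L[ℂ] H)}

theorem IsSMap.one : IsSMap S 1 := ⟨FullCC.one, fun _ _ => rfl⟩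

theorem IsSMap.mul {φ ψ : Module.End ℂ (H →L[ℂ] H)} (hφ : IsSMap S φ) (hψ : IsSMap S ψ) :
    IsSMap S (φ * ψ) :=
  ⟨hφ.1.mul hψ.1, fun s hs => by rw [Module.End.mul_apply, hψ.2 s hs, hφ.2 s hs]⟩

theorem IsSMap.pow {φ : Module.End ℂ (H →L[ℂ] H)} (hφ : IsSMap S φ) (k : ℕ) :
    IsSMap S (φ ^ k) := by
  induction k with
  | zero => exact IsSMap.one
  | succ k ih => exact pow_succ φ k ▸ ih.mul hφ

theorem IsSMap.average {ι : Type*} {s : Finset ι} (hs : s.Nonempty)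
    {F : ι → Module.End ℂ (H →L[ℂ] H)} (hF : ∀ k ∈ s, IsSMap S (F k)) :
    IsSMap S ((#s : ℂ)⁻¹ • ∑ k ∈ s, F k) := by
  refine ⟨FullCC.average s fun k hk => (hF k hk).1, fun a ha => ?_⟩
  have hcard : (#s : ℂ) ≠ 0 := by exact_mod_cast hs.card_pos.ne'
  rw [LinearMap.smul_apply, LinearMap.sum_apply, sum_congr rfl fun k hk => (hF k hk).2 a ha,
    sum_const, ← Nat.cast_smul_eq_nsmul ℂ, smul_smul, inv_mul_cancel₀ hcard, one_smul]

theorem IsMinimalSProj.mul_mul_self {E Φ : Module.End ℂ (H →L[ℂ] H)}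
    (hE : IsMinimalSProj S E) (hΦ : IsSMap S Φ) : E * Φ * E = E := by
  obtain ⟨hES, hEE, hmin⟩ := hE
  have hidem : E * E = E := hEE
  set G := E * Φ * E
  have hGS : IsSMap S G := (hES.mul hΦ).mul hES
  have hGE : G * E = G := by simp only [G, mul_assoc, hidem]
  refine Module.End.eq_of_norm_le_norm_cesaro hGS.1.norm_le
    (by simp only [G, ← mul_assoc, hidem]) fun m hm T => ?_
  set ψ := (m : ℂ)⁻¹ • ∑ k ∈ range m, G ^ (k + 1)
  have hψS : IsSMap S ψ := by
    simpa using IsSMap.average (nonempty_range_iff.mpr hm.ne') fun k _ => hGS.pow (k + 1)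
  have hψE : ψ * E = ψ := by
    simp only [ψ, smul_mul_assoc, sum_mul, pow_succ, mul_assoc, hGE]
  have hψle : ∀ T, ‖ψ T‖ ≤ ‖E T‖ := fun T => by
    rw [← hψE, Module.End.mul_apply]
    exact hψS.1.norm_le (E T)
  exact (hmin ψ hψS hψle T).ge

end Operators

theorem stmt_7_general (A : StarSubalgebra ℂ (H →L[ℂ] H))
    (Φ : (H →L[ℂ] H) →ₗ[ℂ] (H →L[ℂ] H)) (hΦcc : FullCC Φ)
    (hΦfix : ∀ a ∈ A, Φ a = a)
    (hΦrange : ∀ T, Φ T ∈ Set.centralizer (Set.centralizer (A : Set (H →L[ℂ] H))))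
    (E : (H →L[ℂ] H) →ₗ[ℂ] (H →L[ℂ] H)) (hE : IsMinimalSProj (A : Set (H →L[ℂ] H)) E) :
    ⇑E '' Set.centralizer (Set.centralizer (A : Set (H →L[ℂ] H))) = Set.range ⇑E := by
  refine (Set.image_subset_range _ _).antisymm ?_
  rintro _ ⟨T, rfl⟩
  exact ⟨Φ (E T), hΦrange (E T), LinearMap.congr_fun (hE.mul_mul_self ⟨hΦcc, hΦfix⟩) T⟩

/-- If a unital C*-subalgebra `A ⊆ B(H)` has a weak expectation (a
completely contractive map `Φ` of `B(H)` fixing `A` whose range lies in the double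
commutant `A''`), then every minimal `A`-projection `E` satisfies `E(A'') = range E`. -/
theorem stmt_7 (A : StarSubalgebra ℂ (H →L[ℂ] H)) (hA : IsClosed (A : Set (H →L[ℂ] H)))
    (Φ : (H →L[ℂ] H) →ₗ[ℂ] (H →L[ℂ] H)) (hΦcc : FullCC Φ)
    (hΦfix : ∀ a ∈ A, Φ a = a)
    (hΦrange : ∀ T, Φ T ∈ Set.centralizer (Set.centralizer (A : Set (H →L[ℂ] H))))
    (E : (H →L[ℂ] H) →ₗ[ℂ] (H →L[ℂ] H)) (hE : IsMinimalSProj (A : Set (H →L[ℂ] H)) E) :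
    ⇑E '' Set.centralizer (Set.centralizer (A : Set (H →L[ℂ] H))) = Set.range ⇑E :=
  stmt_7_general A Φ hΦcc hΦfix hΦrange E hE
end

section
/- Consider the real C*-algebra L^∞([0,1]) of (equivalence classes of) essentially bounded Lebesgue measurable real-valued functions on [0,1], with C([0,1]) ⊆ L^∞([0,1]) by identifying each continuous function with its equivalence class. Define F_{L^∞}(C([0,1])) = {h ∈ L^∞([0,1]) : φ(h) = h for every linear map φ : L^∞([0,1]) → L^∞([0,1]) that is unital (φ([1]) = [1]), positive (monotone for the almost-everywhere order), and satisfies φ([f]) = [f] for every continuous f : [0,1] → ℝ}. Then h ∈ F_{L^∞}(C([0,1])) if and only if there exists a Riemann integrable function f : [0,1] → ℝ (equivalently, by Lebesgue's criterion, a bounded function whose set of points of discontinuity has Lebesgue measure zero) whose almost-everywhere equivalence class equals h. -/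
/-!
For `g ∈ L^∞` let `P g` be its upper envelope: the pointwise infimum of the functions continuous
on `[0,1]` that lie a.e. above `g`. It is upper semicontinuous, and by Lindelöf's theorem every
function lying a.e. below all these majorants lies a.e. below `P g`; so `g ↦ [P g]` is a sublinear
map of `L^∞` into itself. Every positive linear map fixing `C([0,1])` is dominated by `P`.
Conversely, `L^∞` is Dedekind complete, so by the Hahn–Banach–Kantorovich theorem any value
`y` with `t • y ≤ P (t • h)` for all `t` is `φ h` for some linear `φ ≤ P`, and such a `φ` is
positive, unital and fixes `C([0,1])`. Hence `h` is fixed by all such maps iff `P h = h` and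
`P (-h) = -h`, i.e. iff the upper envelope `P h` and the lower envelope `-P (-h)` agree a.e.,
which says that `P h` is a bounded representative of `h` continuous at almost every point.
-/

open MeasureTheory

/-- Lebesgue measure restricted to the unit interval `[0,1]`. -/
noncomputable def μ01 : Measure ℝ := volume.restrict (Set.Icc (0 : ℝ) 1)

/-- The unit of `L^∞([0,1])`: the class of the constant function `1`. -/
noncomputable def oneLinf : Lp ℝ ⊤ μ01 := (memLp_top_const (1 : ℝ)).toLp _

/-- `f` is Riemann integrable on `[0,1]`: by Lebesgue's criterion, `f` is bounded on
`[0,1]` and its set of points of discontinuity (within `[0,1]`) has Lebesgue measure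
zero. -/
def RiemannIntegrableOn01 (f : ℝ → ℝ) : Prop :=
  (∃ C : ℝ, ∀ x ∈ Set.Icc (0 : ℝ) 1, |f x| ≤ C) ∧
    volume {x ∈ Set.Icc (0 : ℝ) 1 | ¬ ContinuousWithinAt f (Set.Icc (0 : ℝ) 1) x} = 0

open Set Filter
open scoped ENNReal

namespace MeasureTheory.Lp

variable {α : Type*} {m : MeasurableSpace α} {μ : Measure α}

instance {p : ℝ≥0∞} : PosSMulMono ℝ (Lp ℝ p μ) where
  smul_le_smul_of_nonneg_left c hc f g hfg := by
    rw [← coeFn_le] at hfg ⊢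
    filter_upwards [coeFn_smul c f, coeFn_smul c g, hfg] with x hf hg hx
    rw [hf, hg]
    exact mul_le_mul_of_nonneg_left hx hc

theorem ae_norm_le_norm_top {E : Type*} [NormedAddCommGroup E] (f : Lp E ∞ μ) :
    ∀ᵐ x ∂μ, ‖f x‖ ≤ ‖f‖ := by
  filter_upwards [ae_le_eLpNormEssSup (f := ⇑f) (μ := μ)] with x hx
  rw [norm_def, eLpNorm_exponent_top, ← ofReal_norm] at *
  exact (ENNReal.ofReal_le_iff_le_toReal (by simpa [eLpNorm_exponent_top] using
    (Lp.eLpNorm_ne_top f))).1 hx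

theorem exists_isLUB_range_of_bddAbove {x : ℕ → Lp ℝ ∞ μ} (hx : BddAbove (range x)) :
    ∃ s, IsLUB (range x) s := by
  obtain ⟨b, hb⟩ := hx
  have hxb : ∀ᵐ a ∂μ, ∀ n, x n a ≤ b a :=
    ae_all_iff.2 fun n => (coeFn_le _ _).2 (hb (mem_range_self n))
  have hbdd : ∀ᵐ a ∂μ, BddAbove (range fun n => x n a) := by
    filter_upwards [hxb] with a ha using ⟨b a, forall_mem_range.2 ha⟩
  have hmem : MemLp (fun a => ⨆ n, x n a) ∞ μ := by
    have hmeas : AEMeasurable (fun a => ⨆ n, x n a) μ :=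
      AEMeasurable.iSup fun n => (Lp.aestronglyMeasurable (x n)).aemeasurable
    refine ((Lp.memLp (x 0)).norm.add (Lp.memLp b).norm).mono' hmeas.aestronglyMeasurable ?_
    filter_upwards [hxb, hbdd] with a hab ha
    simp only [Pi.add_apply, Real.norm_eq_abs, abs_le]
    constructor
    · linarith [le_ciSup ha 0, neg_abs_le (x 0 a), abs_nonneg (b a)]
    · linarith [ciSup_le hab, le_abs_self (b a), abs_nonneg (x 0 a)]
  refine ⟨hmem.toLp _, ?_, ?_⟩
  · rintro _ ⟨n, rfl⟩
    rw [← coeFn_le]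
    filter_upwards [hmem.coeFn_toLp, hbdd] with a ha hbdd
    exact ha ▸ le_ciSup hbdd n
  · intro v hv
    rw [← coeFn_le]
    have hxv : ∀ᵐ a ∂μ, ∀ n, x n a ≤ v a :=
      ae_all_iff.2 fun n => (coeFn_le _ _).2 (hv (mem_range_self n))
    filter_upwards [hmem.coeFn_toLp, hxv] with a ha hxv
    exact ha ▸ ciSup_le hxv

theorem exists_isLUB_of_bddAbove [IsFiniteMeasure μ] {S : Set (Lp ℝ ∞ μ)} (hne : S.Nonempty)
    (hbdd : BddAbove S) : ∃ s, IsLUB S s := by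
  -- The supremum is that of a sequence in the sup-closure of `S` whose integrals tend to the
  -- supremum of the integrals over the sup-closure.
  let I : Lp ℝ ∞ μ → ℝ := fun f => ∫ a, f a ∂μ
  have hint (f : Lp ℝ ∞ μ) : Integrable f μ := (Lp.memLp f).integrable le_top
  have hI_mono : Monotone I := fun f g hfg =>
    integral_mono_ae (hint f) (hint g) ((coeFn_le f g).2 hfg)
  have hI_sub (f g : Lp ℝ ∞ μ) : I (f - g) = I f - I g := by
    simp only [I, integral_congr_ae (coeFn_sub f g), Pi.sub_apply, integral_sub (hint f) (hint g)]
  obtain ⟨b, hb⟩ := hbdd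
  have hbT : b ∈ upperBounds (supClosure S) := by rwa [upperBounds_supClosure]
  have hIT : BddAbove (I '' supClosure S) :=
    ⟨I b, forall_mem_image.2 fun f hf => hI_mono (hbT hf)⟩
  have hmax (n : ℕ) : ∃ f ∈ supClosure S, sSup (I '' supClosure S) - 1 / (n + 1) < I f := by
    obtain ⟨_, ⟨f, hf, rfl⟩, h⟩ := exists_lt_of_lt_csSup ((hne.mono subset_supClosure).image I)
      (sub_lt_self _ Nat.one_div_pos_of_nat)
    exact ⟨f, hf, h⟩
  choose x hxT hxI using hmax
  obtain ⟨s, hs⟩ := exists_isLUB_range_of_bddAbove ⟨b, forall_mem_range.2 fun n => hbT (hxT n)⟩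
  refine ⟨s, fun f hf => ?_, fun v hv => hs.2 <| forall_mem_range.2 fun n =>
    (upperBounds_supClosure S ▸ hv) (hxT n)⟩
  -- `(f - s)⁺ ≤ (f - x n)⁺ = f ⊔ x n - x n`, whose integral is less than `1 / (n + 1)`
  have hposPart_lt (n : ℕ) : I ((f - s) ⊔ 0) < 1 / (n + 1) := by
    have hle : (f - s) ⊔ 0 ≤ f ⊔ x n - x n := by
      rw [sup_sub, sub_self]
      exact sup_le_sup_right (sub_le_sub_left (hs.1 (mem_range_self n)) f) 0
    have hsup : I (f ⊔ x n) ≤ sSup (I '' supClosure S) :=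
      le_csSup hIT (mem_image_of_mem I
        (supClosed_supClosure (subset_supClosure hf) (hxT n)))
    linarith [hI_mono hle, hI_sub (f ⊔ x n) (x n), hxI n]
  have hposPart_nonneg : 0 ≤ᵐ[μ] ⇑((f - s) ⊔ 0) := (coeFn_nonneg _).2 le_sup_right
  have hposPart_eq_zero : (f - s) ⊔ 0 = 0 := by
    refine Lp.eq_zero_iff_ae_eq_zero.2 <| (integral_eq_zero_iff_of_nonneg_ae hposPart_nonneg
      (hint _)).1 <| le_antisymm ?_ (integral_nonneg_of_ae hposPart_nonneg)
    exact ge_of_tendsto' tendsto_one_div_add_atTop_nhds_zero_nat fun n => (hposPart_lt n).le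
  exact sub_nonpos.1 (sup_eq_right.1 hposPart_eq_zero)

end MeasureTheory.Lp

section Sublinear

variable {E Y : Type*} [AddCommGroup E] [Module ℝ E]
  [AddCommGroup Y] [PartialOrder Y] [IsOrderedAddMonoid Y] [Module ℝ Y]

structure IsSublinear (p : E → Y) : Prop where
  map_add_le : ∀ x y, p (x + y) ≤ p x + p y
  map_smul_of_pos : ∀ c : ℝ, 0 < c → ∀ x, p (c • x) = c • p x

namespace IsSublinear

variable {p : E → Y}

theorem map_zero (hp : IsSublinear p) : p 0 = 0 := by
  have h := hp.map_smul_of_pos 2 two_pos 0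
  rw [smul_zero, two_smul] at h
  exact left_eq_add.1 h

theorem smul_map_le_map_smul [PosSMulMono ℝ Y] (hp : IsSublinear p) (x : E) (t : ℝ) :
    t • p x ≤ p (t • x) := by
  rcases lt_trichotomy t 0 with ht | rfl | ht
  · obtain ⟨s, hs, rfl⟩ : ∃ s, 0 < s ∧ t = -s := ⟨-t, neg_pos.2 ht, (neg_neg t).symm⟩
    have h0 : 0 ≤ p x + p (-x) := by simpa [hp.map_zero] using hp.map_add_le x (-x)
    have hpx : p ((-s) • x) = s • p (-x) := by rw [neg_smul, ← smul_neg, hp.map_smul_of_pos s hs]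
    rw [hpx, neg_smul, neg_le_iff_add_nonneg', ← smul_add]
    exact smul_nonneg hs.le h0
  · simp [hp.map_zero]
  · exact (hp.map_smul_of_pos t ht x).ge

end IsSublinear

namespace LinearPMap

variable [PosSMulMono ℝ Y] {p : E → Y}

theorem supSpanSingleton_le_of_isSublinear (hp : IsSublinear p) {f : E →ₗ.[ℝ] Y}
    (hf : ∀ v : f.domain, f v ≤ p v) {x : E} (hx : x ∉ f.domain) {c : Y}
    (hlow : ∀ v : f.domain, f v - p (v - x) ≤ c) (hupp : ∀ v : f.domain, c ≤ p (v + x) - f v) :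
    ∀ z : (f.supSpanSingleton x c hx).domain, f.supSpanSingleton x c hx z ≤ p z := by
  rintro ⟨z, hz⟩
  obtain ⟨v, hv, _, hy, rfl⟩ := Submodule.mem_sup.1 (by rwa [domain_supSpanSingleton] at hz)
  obtain ⟨t, rfl⟩ := Submodule.mem_span_singleton.1 hy
  rw [supSpanSingleton_apply_mk f x c hx v hv t]
  change f ⟨v, hv⟩ + t • c ≤ p (v + t • x)
  rcases lt_trichotomy t 0 with ht | rfl | ht
  · obtain ⟨s, hs, rfl⟩ : ∃ s, 0 < s ∧ t = -s := ⟨-t, neg_pos.2 ht, (neg_neg t).symm⟩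
    have h := smul_le_smul_of_nonneg_left (hlow (s⁻¹ • ⟨v, hv⟩)) hs.le
    rw [smul_sub, f.map_smul, smul_inv_smul₀ hs.ne', ← hp.map_smul_of_pos s hs,
      Submodule.coe_smul, smul_sub, smul_inv_smul₀ hs.ne'] at h
    rw [neg_smul, neg_smul, ← sub_eq_add_neg, ← sub_eq_add_neg]
    exact sub_le_comm.1 h
  · simpa using hf ⟨v, hv⟩
  · have h := smul_le_smul_of_nonneg_left (hupp (t⁻¹ • ⟨v, hv⟩)) ht.le
    rw [smul_sub, f.map_smul, smul_inv_smul₀ ht.ne', ← hp.map_smul_of_pos t ht,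
      Submodule.coe_smul, smul_add, smul_inv_smul₀ ht.ne'] at h
    exact le_sub_iff_add_le'.1 h

theorem exists_gt_le_of_isSublinear (hp : IsSublinear p)
    (hY : ∀ S : Set Y, S.Nonempty → BddAbove S → ∃ c, IsLUB S c) {f : E →ₗ.[ℝ] Y}
    (hf : ∀ v : f.domain, f v ≤ p v) (hdom : f.domain ≠ ⊤) :
    ∃ g, f < g ∧ ∀ v : g.domain, g v ≤ p v := by
  obtain ⟨x, -, hx⟩ := SetLike.exists_of_lt (lt_top_iff_ne_top.2 hdom)
  have hsep (v w : f.domain) : f v - p (v - x) ≤ p (w + x) - f w := by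
    rw [sub_le_sub_iff, ← f.map_add]
    calc f (v + w) ≤ p (v + w) := hf (v + w)
      _ ≤ p (v - x) + p (w + x) := by
        simpa only [sub_add_add_cancel] using hp.map_add_le (v - x : E) (w + x)
      _ = p (w + x) + p (v - x) := add_comm _ _
  obtain ⟨c, hc⟩ := hY (range fun v : f.domain => f v - p (v - x)) (range_nonempty _)
    ⟨_, forall_mem_range.2 fun v => hsep v 0⟩
  refine ⟨f.supSpanSingleton x c hx, ?_, supSpanSingleton_le_of_isSublinear hp hf hx
    (fun v => hc.1 (mem_range_self v)) fun w => hc.2 (forall_mem_range.2 fun v => hsep v w)⟩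
  refine lt_iff_le_not_ge.2 ⟨f.left_le_sup _ _, fun H => hx ?_⟩
  have := domain_mono.monotone H
  rw [domain_supSpanSingleton, sup_le_iff, Submodule.span_le, singleton_subset_iff] at this
  exact this.2

theorem exists_extension_le_of_isSublinear (hp : IsSublinear p)
    (hY : ∀ S : Set Y, S.Nonempty → BddAbove S → ∃ c, IsLUB S c) (f : E →ₗ.[ℝ] Y)
    (hf : ∀ v : f.domain, f v ≤ p v) :
    ∃ g : E →ₗ[ℝ] Y, (∀ v : f.domain, g v = f v) ∧ ∀ x, g x ≤ p x := by
  let S := {g : E →ₗ.[ℝ] Y | ∀ v : g.domain, g v ≤ p v}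
  have hS : ∀ C ⊆ S, IsChain (· ≤ ·) C → ∀ g ∈ C, ∃ ub ∈ S, ∀ g' ∈ C, g' ≤ ub := by
    intro C hCS hC g hg
    have hCd : DirectedOn (· ≤ ·) C := hC.directedOn
    refine ⟨LinearPMap.sSup C hCd, ?_, fun _ => LinearPMap.le_sSup hCd⟩
    rintro ⟨x, hx⟩
    obtain ⟨_, ⟨g', hg'C, rfl⟩, hxg'⟩ := (Submodule.mem_sSup_of_directed ⟨_, mem_image_of_mem _ hg⟩
      (directedOn_image.2 (hCd.mono domain_mono.monotone))).1 hx
    rw [← (LinearPMap.le_sSup hCd hg'C).2 (x := ⟨x, hxg'⟩) rfl]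
    exact hCS hg'C ⟨x, hxg'⟩
  obtain ⟨q, hfq, hqS, hq⟩ := zorn_le_nonempty₀ S hS f hf
  obtain ⟨q_dom, q⟩ := q
  obtain rfl : q_dom = ⊤ := by
    by_contra hdom
    obtain ⟨r, hqr, hr⟩ := exists_gt_le_of_isSublinear hp hY hqS hdom
    exact hqr.ne' ((hq hr hqr.le).antisymm hqr.le)
  exact ⟨q.comp (LinearMap.id.codRestrict ⊤ fun _ => trivial), fun v => (hfq.2 rfl).symm,
    fun x => hqS ⟨x, trivial⟩⟩

end LinearPMap

namespace IsSublinear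

variable [PosSMulMono ℝ Y] {p : E → Y}

theorem exists_linearMap_le_apply_eq (hp : IsSublinear p)
    (hY : ∀ S : Set Y, S.Nonempty → BddAbove S → ∃ c, IsLUB S c) (x : E) (y : Y)
    (hy : ∀ t : ℝ, t • y ≤ p (t • x)) :
    ∃ φ : E →ₗ[ℝ] Y, (∀ z, φ z ≤ p z) ∧ φ x = y := by
  have hker (t : ℝ) (ht : t • x = 0) : t • y = 0 := by
    refine le_antisymm (by simpa [ht, hp.map_zero] using hy t) ?_
    simpa [ht, hp.map_zero] using hy (-t)
  let f := LinearPMap.mkSpanSingleton' (σ := RingHom.id ℝ) x y hker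
  have hf : ∀ v : f.domain, f v ≤ p v := by
    rintro ⟨v, hv⟩
    obtain ⟨t, rfl⟩ := Submodule.mem_span_singleton.1 hv
    rw [LinearPMap.mkSpanSingleton'_apply x y hker t hv]
    exact hy t
  obtain ⟨φ, hφf, hφp⟩ := LinearPMap.exists_extension_le_of_isSublinear hp hY f hf
  exact ⟨φ, hφp, (hφf ⟨x, Submodule.mem_span_singleton_self x⟩).trans
    (LinearPMap.mkSpanSingleton'_apply_self x y hker _)⟩

end IsSublinear

end Sublinear

theorem UpperSemicontinuousOn.aemeasurable {X : Type*} [TopologicalSpace X] [MeasurableSpace X]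
    [OpensMeasurableSpace X] {μ : Measure X} {s : Set X} {f : X → ℝ}
    (hf : UpperSemicontinuousOn f s) (hs : MeasurableSet s) : AEMeasurable f (μ.restrict s) :=
  aemeasurable_restrict_of_measurable_subtype hs
    (upperSemicontinuousOn_iff_restrict.2 hf).measurable

theorem le_on_Icc_of_ae_le {X : Type*} [TopologicalSpace X] [LinearOrder X] [OrderTopology X]
    [DenselyOrdered X] [MeasurableSpace X] [OpensMeasurableSpace X] {μ : Measure X}
    [μ.IsOpenPosMeasure] {a b : X} (hab : a ≠ b) {u v : X → ℝ}
    (hu : ContinuousOn u (Icc a b)) (hv : ContinuousOn v (Icc a b))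
    (huv : u ≤ᵐ[μ.restrict (Icc a b)] v) : ∀ x ∈ Icc a b, u x ≤ v x := by
  have h := Measure.eqOn_Icc_of_ae_eq μ hab (f := fun x => min (u x) (v x))
    (huv.mono fun x hx => min_eq_left hx) (hu.inf hv) hu
  exact fun x hx => min_eq_left_iff.1 (h hx)

theorem ae_forall_le_of_forall_ae_le {X ι : Type*} [TopologicalSpace X]
    [SecondCountableTopology X] [MeasurableSpace X] {μ : Measure X} {s : Set X}
    (hs : ∀ᵐ x ∂μ, x ∈ s) {U : ι → X → ℝ} (hU : ∀ i, ContinuousOn (U i) s) {k : X → ℝ}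
    (hk : ∀ i, k ≤ᵐ[μ] U i) : ∀ᵐ x ∂μ, ∀ i, k x ≤ U i x := by
  choose O hO hOs using fun i (c : ℝ) => continuousOn_iff'.1 (hU i) (Iio c) isOpen_Iio
  -- Lindelöf: for each rational `q`, countably many of the sets `{U i < q}` cover their union
  choose T hT hTO using fun q : ℚ =>
    TopologicalSpace.isOpen_iUnion_countable (fun i => O i q) fun i => hO i q
  have hkT : ∀ᵐ x ∂μ, ∀ q : ℚ, ∀ i ∈ T q, k x ≤ U i x :=
    ae_all_iff.2 fun q => (ae_ball_iff (hT q)).2 fun i _ => hk i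
  filter_upwards [hkT, hs] with x hx hxs i
  by_contra! hlt
  obtain ⟨q, hUq, hqk⟩ := exists_rat_btwn hlt
  have hxO : x ∈ ⋃ i ∈ T q, O i q := by
    rw [hTO q]
    exact mem_iUnion.2 ⟨i, ((hOs i q).subset ⟨hUq, hxs⟩).1⟩
  obtain ⟨j, hj, hxj⟩ := mem_iUnion₂.1 hxO
  have hUj : U j x < q := ((hOs j q).symm.subset ⟨hxj, hxs⟩).1
  exact (hx q j hj).not_gt (hUj.trans hqk)

instance : IsFiniteMeasure μ01 := by
  unfold μ01
  infer_instance

theorem ae_mem_Icc01 : ∀ᵐ x ∂μ01, x ∈ Icc (0 : ℝ) 1 :=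
  ae_restrict_mem measurableSet_Icc

theorem ae_μ01_iff_volume_eq_zero {P : ℝ → Prop} :
    (∀ᵐ x ∂μ01, P x) ↔ volume {x ∈ Icc (0 : ℝ) 1 | ¬ P x} = 0 := by
  rw [ae_iff, μ01, Measure.restrict_apply' measurableSet_Icc, inter_comm]
  rfl

theorem le_on_Icc01_of_ae_le {u v : ℝ → ℝ} (hu : ContinuousOn u (Icc 0 1))
    (hv : ContinuousOn v (Icc 0 1)) (huv : u ≤ᵐ[μ01] v) : ∀ x ∈ Icc (0 : ℝ) 1, u x ≤ v x :=
  le_on_Icc_of_ae_le zero_ne_one hu hv huv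

theorem memLp_μ01_of_continuousOn {u : ℝ → ℝ} (hu : ContinuousOn u (Icc 0 1)) :
    MemLp u ∞ μ01 := by
  obtain ⟨C, hC⟩ := isCompact_Icc.exists_bound_of_continuousOn hu
  exact memLp_top_of_bound (hu.aestronglyMeasurable measurableSet_Icc) C (ae_mem_Icc01.mono hC)

theorem RiemannIntegrableOn01.neg {f : ℝ → ℝ} (hf : RiemannIntegrableOn01 f) :
    RiemannIntegrableOn01 (-f) := by
  obtain ⟨⟨C, hC⟩, hcont⟩ := hf
  refine ⟨⟨C, fun x hx => by simpa using hC x hx⟩, ?_⟩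
  rw [← ae_μ01_iff_volume_eq_zero] at hcont ⊢
  exact hcont.mono fun x hx => hx.neg

def contMajorants (g : Lp ℝ ∞ μ01) : Set (ℝ → ℝ) :=
  {u | ContinuousOn u (Icc 0 1) ∧ ⇑g ≤ᵐ[μ01] u}

noncomputable def upperEnvelope (g : Lp ℝ ∞ μ01) (x : ℝ) : ℝ :=
  ⨅ u : contMajorants g, (u : ℝ → ℝ) x

section upperEnvelope

variable {g : Lp ℝ ∞ μ01} {u : ℝ → ℝ} {x : ℝ}

theorem const_norm_mem_contMajorants (g : Lp ℝ ∞ μ01) : (fun _ => ‖g‖) ∈ contMajorants g :=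
  ⟨continuousOn_const, (Lp.ae_norm_le_norm_top g).mono fun _ hx => (le_abs_self _).trans hx⟩

theorem neg_norm_le_of_mem_contMajorants (hu : u ∈ contMajorants g) (hx : x ∈ Icc (0 : ℝ) 1) :
    -‖g‖ ≤ u x := by
  refine le_on_Icc01_of_ae_le continuousOn_const hu.1 ?_ x hx
  filter_upwards [Lp.ae_norm_le_norm_top g, hu.2] with y hy hgu
  exact (neg_le_of_abs_le hy).trans hgu

theorem bddBelow_contMajorants_apply (hx : x ∈ Icc (0 : ℝ) 1) :
    BddBelow (range fun u : contMajorants g => (u : ℝ → ℝ) x) :=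
  ⟨-‖g‖, forall_mem_range.2 fun u => neg_norm_le_of_mem_contMajorants u.2 hx⟩

theorem upperEnvelope_le (hu : u ∈ contMajorants g) (hx : x ∈ Icc (0 : ℝ) 1) :
    upperEnvelope g x ≤ u x :=
  ciInf_le (bddBelow_contMajorants_apply hx) ⟨u, hu⟩

theorem le_upperEnvelope {c : ℝ} (h : ∀ u ∈ contMajorants g, c ≤ u x) : c ≤ upperEnvelope g x :=
  have : Nonempty (contMajorants g) := ⟨⟨_, const_norm_mem_contMajorants g⟩⟩
  le_ciInf fun u => h u u.2

theorem abs_upperEnvelope_le (hx : x ∈ Icc (0 : ℝ) 1) : |upperEnvelope g x| ≤ ‖g‖ :=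
  abs_le.2 ⟨le_upperEnvelope fun _ hu => neg_norm_le_of_mem_contMajorants hu hx,
    upperEnvelope_le (const_norm_mem_contMajorants g) hx⟩

theorem upperSemicontinuousOn_upperEnvelope (g : Lp ℝ ∞ μ01) :
    UpperSemicontinuousOn (upperEnvelope g) (Icc 0 1) :=
  upperSemicontinuousOn_ciInf (fun _ hx => bddBelow_contMajorants_apply hx)
    fun u => u.2.1.upperSemicontinuousOn

theorem memLp_upperEnvelope (g : Lp ℝ ∞ μ01) : MemLp (upperEnvelope g) ∞ μ01 :=
  memLp_top_of_bound
    ((upperSemicontinuousOn_upperEnvelope g).aemeasurable measurableSet_Icc).aestronglyMeasurable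
    ‖g‖ (ae_mem_Icc01.mono fun _ hx => abs_upperEnvelope_le hx)

theorem ae_le_upperEnvelope {k : ℝ → ℝ} (hk : ∀ u ∈ contMajorants g, k ≤ᵐ[μ01] u) :
    k ≤ᵐ[μ01] upperEnvelope g := by
  have : Nonempty (contMajorants g) := ⟨⟨_, const_norm_mem_contMajorants g⟩⟩
  filter_upwards [ae_forall_le_of_forall_ae_le ae_mem_Icc01
    (U := fun u : contMajorants g => (u : ℝ → ℝ)) (fun u => u.2.1) fun u => hk u u.2]
    with x hx using le_ciInf hx

theorem neg_upperEnvelope_neg_le (hx : x ∈ Icc (0 : ℝ) 1) :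
    -upperEnvelope (-g) x ≤ upperEnvelope g x := by
  refine le_upperEnvelope fun u hu => neg_le.1 <| le_upperEnvelope fun w hw => ?_
  have hsum : ∀ y ∈ Icc (0 : ℝ) 1, 0 ≤ u y + w y := by
    refine le_on_Icc01_of_ae_le continuousOn_const (hu.1.add hw.1) ?_
    filter_upwards [hu.2, hw.2, Lp.coeFn_neg g] with y hgu hgw hneg
    rw [hneg] at hgw
    simp only [Pi.neg_apply] at hgw
    linarith
  linarith [hsum x hx]

theorem continuousWithinAt_upperEnvelope (hx : x ∈ Icc (0 : ℝ) 1)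
    (h : upperEnvelope g x = -upperEnvelope (-g) x) :
    ContinuousWithinAt (upperEnvelope g) (Icc 0 1) x := by
  refine continuousWithinAt_iff_lower_upperSemicontinuousWithinAt.2
    ⟨fun c hc => ?_, upperSemicontinuousOn_upperEnvelope g x hx⟩
  -- lower semicontinuity comes from the upper semicontinuity of `upperEnvelope (-g)`
  have hlt : upperEnvelope (-g) x < -c := by linarith
  filter_upwards [upperSemicontinuousOn_upperEnvelope (-g) x hx (-c) hlt,
    self_mem_nhdsWithin] with y hy hyI
  linarith [neg_upperEnvelope_neg_le (g := g) hyI]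

theorem upperEnvelope_le_of_continuousWithinAt {f : ℝ → ℝ} {C : ℝ}
    (hC : ∀ y ∈ Icc (0 : ℝ) 1, |f y| ≤ C) (hgf : ⇑g =ᵐ[μ01] f) (hx : x ∈ Icc (0 : ℝ) 1)
    (hf : ContinuousWithinAt f (Icc 0 1) x) : upperEnvelope g x ≤ f x := by
  refine le_of_forall_pos_le_add fun ε hε => ?_
  obtain ⟨r, hr, hball⟩ := Metric.mem_nhdsWithin_iff.1
    (hf.eventually_lt_const (lt_add_of_pos_right (f x) hε))
  have hC0 : 0 ≤ C := (abs_nonneg _).trans (hC x hx)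
  -- a cone of slope `2 C / r` over the level `f x + ε` dominates `f` on `[0,1]`
  have hu : (fun y => f x + ε + 2 * C / r * dist y x) ∈ contMajorants g := by
    refine ⟨by fun_prop, ?_⟩
    filter_upwards [hgf, ae_mem_Icc01] with y hy hyI
    rw [hy]
    by_cases hyr : dist y x < r
    · have hfy : f y < f x + ε := hball ⟨hyr, hyI⟩
      have : 0 ≤ 2 * C / r * dist y x := by positivity
      linarith
    · have : 2 * C ≤ 2 * C / r * dist y x := by
        rw [div_mul_eq_mul_div, le_div_iff₀ hr]
        exact mul_le_mul_of_nonneg_left (not_lt.1 hyr) (by positivity)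
      linarith [le_of_abs_le (hC y hyI), neg_le_of_abs_le (hC x hx)]
  simpa using upperEnvelope_le hu hx

theorem upperEnvelope_add_le (g g' : Lp ℝ ∞ μ01) (hx : x ∈ Icc (0 : ℝ) 1) :
    upperEnvelope (g + g') x ≤ upperEnvelope g x + upperEnvelope g' x := by
  rw [← sub_le_iff_le_add]
  refine le_upperEnvelope fun u hu => ?_
  rw [sub_le_comm]
  refine le_upperEnvelope fun w hw => ?_
  rw [sub_le_iff_le_add]
  refine upperEnvelope_le (u := fun y => w y + u y) ⟨hw.1.add hu.1, ?_⟩ hx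
  filter_upwards [Lp.coeFn_add g g', hu.2, hw.2] with y hy hgu hgw
  rw [hy, Pi.add_apply, add_comm]
  exact add_le_add hgw hgu

theorem upperEnvelope_smul_le {c : ℝ} (hc : 0 < c) (g : Lp ℝ ∞ μ01) (hx : x ∈ Icc (0 : ℝ) 1) :
    upperEnvelope (c • g) x ≤ c * upperEnvelope g x := by
  rw [← div_le_iff₀' hc]
  refine le_upperEnvelope fun u hu => ?_
  rw [div_le_iff₀' hc]
  refine upperEnvelope_le (u := fun y => c * u y) ⟨continuousOn_const.mul hu.1, ?_⟩ hx
  filter_upwards [Lp.coeFn_smul c g, hu.2] with y hy hgu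
  rw [hy]
  exact mul_le_mul_of_nonneg_left hgu hc.le

end upperEnvelope

noncomputable def upperEnvelopeLp (g : Lp ℝ ∞ μ01) : Lp ℝ ∞ μ01 :=
  (memLp_upperEnvelope g).toLp _

section upperEnvelopeLp

variable {g : Lp ℝ ∞ μ01}

theorem coeFn_upperEnvelopeLp (g : Lp ℝ ∞ μ01) : ⇑(upperEnvelopeLp g) =ᵐ[μ01] upperEnvelope g :=
  (memLp_upperEnvelope g).coeFn_toLp

theorem le_upperEnvelopeLp_of_forall {k : Lp ℝ ∞ μ01}
    (hk : ∀ u ∈ contMajorants g, ⇑k ≤ᵐ[μ01] u) : k ≤ upperEnvelopeLp g :=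
  (Lp.coeFn_le _ _).1 <| (ae_le_upperEnvelope hk).trans_eq (coeFn_upperEnvelopeLp g).symm

theorem le_upperEnvelopeLp (g : Lp ℝ ∞ μ01) : g ≤ upperEnvelopeLp g :=
  le_upperEnvelopeLp_of_forall fun _ hu => hu.2

theorem upperEnvelopeLp_le {k : Lp ℝ ∞ μ01} {u : ℝ → ℝ} (hu : u ∈ contMajorants g)
    (hk : ⇑k =ᵐ[μ01] u) : upperEnvelopeLp g ≤ k := by
  rw [← Lp.coeFn_le]
  filter_upwards [coeFn_upperEnvelopeLp g, hk, ae_mem_Icc01] with x hgx hkx hx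
  rw [hgx, hkx]
  exact upperEnvelope_le hu hx

theorem upperEnvelopeLp_eq_self_of_continuousOn {f : ℝ → ℝ} (hf : ContinuousOn f (Icc 0 1))
    (hgf : ⇑g =ᵐ[μ01] f) : upperEnvelopeLp g = g :=
  (upperEnvelopeLp_le ⟨hf, hgf.le⟩ hgf).antisymm (le_upperEnvelopeLp g)

theorem upperEnvelopeLp_smul_le {c : ℝ} (hc : 0 < c) (g : Lp ℝ ∞ μ01) :
    upperEnvelopeLp (c • g) ≤ c • upperEnvelopeLp g := by
  rw [← Lp.coeFn_le]
  filter_upwards [coeFn_upperEnvelopeLp (c • g), coeFn_upperEnvelopeLp g,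
    Lp.coeFn_smul c (upperEnvelopeLp g), ae_mem_Icc01] with x hcgx hgx hx hxI
  rw [hcgx, hx, Pi.smul_apply, hgx]
  exact upperEnvelope_smul_le hc g hxI

theorem isSublinear_upperEnvelopeLp : IsSublinear upperEnvelopeLp where
  map_add_le g g' := by
    rw [← Lp.coeFn_le]
    filter_upwards [coeFn_upperEnvelopeLp (g + g'), coeFn_upperEnvelopeLp g,
      coeFn_upperEnvelopeLp g', Lp.coeFn_add (upperEnvelopeLp g) (upperEnvelopeLp g'),
      ae_mem_Icc01] with x hsum hgx hgx' hadd hx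
    rw [hsum, hadd, Pi.add_apply, hgx, hgx']
    exact upperEnvelope_add_le g g' hx
  map_smul_of_pos c hc g := by
    refine (upperEnvelopeLp_smul_le hc g).antisymm ?_
    have h := smul_le_smul_of_nonneg_left (upperEnvelopeLp_smul_le (inv_pos.2 hc) (c • g)) hc.le
    rwa [inv_smul_smul₀ hc.ne', smul_inv_smul₀ hc.ne'] at h

theorem upperEnvelopeLp_eq_self_of_riemannIntegrableOn01 {f : ℝ → ℝ}
    (hf : RiemannIntegrableOn01 f) (hgf : ⇑g =ᵐ[μ01] f) : upperEnvelopeLp g = g := by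
  obtain ⟨⟨C, hC⟩, hcont⟩ := hf
  refine le_antisymm ?_ (le_upperEnvelopeLp g)
  rw [← Lp.coeFn_le]
  filter_upwards [coeFn_upperEnvelopeLp g, hgf, ae_μ01_iff_volume_eq_zero.2 hcont, ae_mem_Icc01]
    with x hgx hfx hcx hx
  rw [hgx, hfx]
  exact upperEnvelope_le_of_continuousWithinAt hC hgf hx hcx

theorem riemannIntegrableOn01_upperEnvelope (h : upperEnvelopeLp g = g)
    (hneg : upperEnvelopeLp (-g) = -g) : RiemannIntegrableOn01 (upperEnvelope g) := by
  refine ⟨⟨‖g‖, fun x hx => abs_upperEnvelope_le hx⟩, ae_μ01_iff_volume_eq_zero.1 ?_⟩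
  have hg := coeFn_upperEnvelopeLp g
  have hg' := coeFn_upperEnvelopeLp (-g)
  rw [h] at hg
  rw [hneg] at hg'
  filter_upwards [hg, hg', Lp.coeFn_neg g, ae_mem_Icc01] with x hgx hgx' hnegx hx
  refine continuousWithinAt_upperEnvelope hx ?_
  rw [← hgx, ← hgx', hnegx, Pi.neg_apply, neg_neg]

end upperEnvelopeLp

section PositiveMaps

variable {φ : Lp ℝ ∞ μ01 →ₗ[ℝ] Lp ℝ ∞ μ01}

theorem map_le_upperEnvelopeLp
    (hpos : ∀ g : Lp ℝ ∞ μ01, (∀ᵐ x ∂μ01, 0 ≤ g x) → ∀ᵐ x ∂μ01, 0 ≤ φ g x)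
    (hfix : ∀ (f : ℝ → ℝ) (g : Lp ℝ ∞ μ01), ContinuousOn f (Icc 0 1) → ⇑g =ᵐ[μ01] f → φ g = g)
    (g : Lp ℝ ∞ μ01) : φ g ≤ upperEnvelopeLp g := by
  have hmono : Monotone φ := fun a b hab => by
    have h := (Lp.coeFn_nonneg _).1 (hpos (b - a) ((Lp.coeFn_nonneg _).2 (sub_nonneg.2 hab)))
    rwa [map_sub, sub_nonneg] at h
  refine le_upperEnvelopeLp_of_forall fun u hu => ?_
  have hU := (memLp_μ01_of_continuousOn hu.1).coeFn_toLp
  have hgU : g ≤ (memLp_μ01_of_continuousOn hu.1).toLp u :=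
    (Lp.coeFn_le _ _).1 (hu.2.trans_eq hU.symm)
  exact ((Lp.coeFn_le _ _).2 ((hmono hgU).trans_eq (hfix u _ hu.1 hU))).trans_eq hU

theorem map_eq_self_of_le_upperEnvelopeLp (hφ : ∀ g, φ g ≤ upperEnvelopeLp g) {f : ℝ → ℝ}
    {g : Lp ℝ ∞ μ01} (hf : ContinuousOn f (Icc 0 1)) (hgf : ⇑g =ᵐ[μ01] f) : φ g = g := by
  refine ((hφ g).trans_eq (upperEnvelopeLp_eq_self_of_continuousOn hf hgf)).antisymm ?_
  have h := (hφ (-g)).trans_eq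
    (upperEnvelopeLp_eq_self_of_continuousOn hf.neg ((Lp.coeFn_neg g).trans hgf.neg))
  rwa [map_neg, neg_le_neg_iff] at h

theorem ae_nonneg_map_of_le_upperEnvelopeLp (hφ : ∀ g, φ g ≤ upperEnvelopeLp g)
    {g : Lp ℝ ∞ μ01} (hg : ∀ᵐ x ∂μ01, 0 ≤ g x) : ∀ᵐ x ∂μ01, 0 ≤ φ g x := by
  have h0 : (0 : ℝ → ℝ) ∈ contMajorants (-g) := by
    refine ⟨continuousOn_const, ?_⟩
    filter_upwards [Lp.coeFn_neg g, hg] with x hx hgx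
    rw [hx, Pi.neg_apply, Pi.zero_apply, neg_nonpos]
    exact hgx
  have h := (hφ (-g)).trans (upperEnvelopeLp_le h0 (Lp.coeFn_zero ℝ ∞ μ01))
  rwa [map_neg, neg_nonpos, ← Lp.coeFn_nonneg] at h

end PositiveMaps

/-- An element `h` of the real algebra `L^∞([0,1])` is fixed by every
unital positive linear map of `L^∞([0,1])` fixing (the classes of) all continuous
functions if and only if `h` is the almost-everywhere class of a Riemann integrable
function on `[0,1]`. -/
theorem stmt_19 (h : Lp ℝ ⊤ μ01) :
    (∀ φ : Lp ℝ ⊤ μ01 →ₗ[ℝ] Lp ℝ ⊤ μ01,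
        φ oneLinf = oneLinf →
        (∀ g : Lp ℝ ⊤ μ01, (∀ᵐ x ∂μ01, 0 ≤ g x) → (∀ᵐ x ∂μ01, 0 ≤ φ g x)) →
        (∀ (f : ℝ → ℝ) (g : Lp ℝ ⊤ μ01), ContinuousOn f (Set.Icc (0 : ℝ) 1) →
          (⇑g =ᵐ[μ01] f) → φ g = g) →
        φ h = h) ↔
      ∃ f : ℝ → ℝ, RiemannIntegrableOn01 f ∧ ⇑h =ᵐ[μ01] f := by
  constructor
  · intro hfixed
    have hvalue (y : Lp ℝ ∞ μ01) (hy : ∀ t : ℝ, t • y ≤ upperEnvelopeLp (t • h)) : y = h := by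
      obtain ⟨φ, hφ, rfl⟩ := isSublinear_upperEnvelopeLp.exists_linearMap_le_apply_eq
        (fun _ => Lp.exists_isLUB_of_bddAbove) h y hy
      exact hfixed φ (map_eq_self_of_le_upperEnvelopeLp hφ continuousOn_const
          (memLp_top_const 1).coeFn_toLp) (fun _ => ae_nonneg_map_of_le_upperEnvelopeLp hφ)
        fun _ _ => map_eq_self_of_le_upperEnvelopeLp hφ
    have hup := hvalue _ (isSublinear_upperEnvelopeLp.smul_map_le_map_smul h)
    have hlow := hvalue (-upperEnvelopeLp (-h)) fun t => by
      simpa using isSublinear_upperEnvelopeLp.smul_map_le_map_smul (-h) (-t)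
    have hcoe := coeFn_upperEnvelopeLp h
    rw [hup] at hcoe
    exact ⟨_, riemannIntegrableOn01_upperEnvelope hup (neg_eq_iff_eq_neg.1 hlow), hcoe⟩
  · rintro ⟨f, hf, hhf⟩ φ - hpos hfix
    refine ((map_le_upperEnvelopeLp hpos hfix h).trans_eq
      (upperEnvelopeLp_eq_self_of_riemannIntegrableOn01 hf hhf)).antisymm ?_
    have hneg := (map_le_upperEnvelopeLp hpos hfix (-h)).trans_eq
      (upperEnvelopeLp_eq_self_of_riemannIntegrableOn01 hf.neg ((Lp.coeFn_neg h).trans hhf.neg))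
    rwa [map_neg, neg_le_neg_iff] at hneg
end
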